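/- For each i let ν_i be a Borel probability measure on ℂ^{d_i×d_i} such that for every h ∈ G the maps z ↦ q_i(h⁻¹) z and z ↦ z q_i(h⁻¹) are measure-preserving for ν_i, and let ν = ν_1 ⊗ ⋯ ⊗ ν_m be the product measure. Fix nonnegative reals γ_1,…,γ_m, assume that for every g ∈ G and ν-a.e. z one has D((γ_i q_i(g) + √γ_i z_i)_i) ≠ 0, and assume the function z ↦ F_ρ((γ_i q_i(g) + √γ_i z_i)_i) is Bochner integrable with respect to ν for every g ∈ G. Define f_ρ(g) := ∫ F_ρ((γ_i q_i(g) + √γ_i z_i)_i) dν(z) ∈ ℂ^{d×d}. Then for all g, h ∈ G: f_ρ(hg) = ρ(h) f_ρ(g) and f_ρ(gh) = f_ρ(g) ρ(h). -/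

import Mathlib

/-!
Both `D` and `N_ρ` are Haar integrals against the weight `k ↦ exp (Σᵢ ⟨wᵢ, qᵢ(k)⟩)`. Since the
`qᵢ` are unitary, replacing `wᵢ` by `qᵢ(a) wᵢ qᵢ(b)` turns this weight into its translate
`k ↦ exp (Σᵢ ⟨wᵢ, qᵢ(a⁻¹ k b⁻¹)⟩)`, and a Haar probability measure on a compact group is left and
right invariant; hence `D` is unchanged and `N_ρ` becomes `ρ(a) N_ρ ρ(b)`. So
`F_ρ(qᵢ(a) wᵢ qᵢ(b)) = ρ(a) F_ρ(w) ρ(b)`. Finally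
`γᵢ qᵢ(agb) + √γᵢ qᵢ(a) zᵢ qᵢ(b) = qᵢ(a) (γᵢ qᵢ(g) + √γᵢ zᵢ) qᵢ(b)`, and the substitution
`zᵢ ↦ qᵢ(a) zᵢ qᵢ(b)` preserves `ν`, which gives `f_ρ(agb) = ρ(a) f_ρ(g) ρ(b)`.
-/

open MeasureTheory Matrix

/-- Measurable-space structure on matrices (entrywise, i.e. the product σ-algebra). -/
instance matrixMeasurableSpace {m n α : Type*} [MeasurableSpace α] :
    MeasurableSpace (Matrix m n α) :=
  inferInstanceAs (MeasurableSpace (m → n → α))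

section MatrixIntegral

variable {X : Type*} [MeasurableSpace X] {p r s t : Type*}

noncomputable def matrixIntegral (F : X → Matrix p r ℂ) (ν : Measure X) : Matrix p r ℂ :=
  of fun a b => ∫ z, F z a b ∂ν

variable {ν : Measure X}

lemma matrixIntegral_mul_mul [Fintype p] [Fintype r] {F : X → Matrix p r ℂ} (A : Matrix s p ℂ)
    (B : Matrix r t ℂ) (hF : ∀ a b, Integrable (fun z => F z a b) ν) :
    matrixIntegral (fun z => A * F z * B) ν = A * matrixIntegral F ν * B := by
  ext a b
  simp only [matrixIntegral, of_apply, mul_apply, Finset.sum_mul]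
  rw [integral_finsetSum _ fun c _ => integrable_finsetSum _ fun e _ =>
    ((hF e c).const_mul _).mul_const _]
  refine Finset.sum_congr rfl fun c _ => ?_
  rw [integral_finsetSum _ fun e _ => ((hF e c).const_mul _).mul_const _]
  exact Finset.sum_congr rfl fun e _ => by rw [integral_mul_const, integral_const_mul]

lemma MeasureTheory.MeasurePreserving.matrixIntegral_comp {Y : Type*} [MeasurableSpace Y]
    {ν' : Measure Y} {T : X → Y} (hT : MeasurePreserving T ν ν') {F : Y → Matrix p r ℂ}
    (hF : ∀ a b, AEStronglyMeasurable (fun y => F y a b) ν') :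
    matrixIntegral (fun z => F (T z)) ν = matrixIntegral F ν' := by
  ext a b
  rw [matrixIntegral, matrixIntegral, of_apply, of_apply, ← hT.map_eq]
  exact (integral_map hT.measurable.aemeasurable (hT.map_eq ▸ hF a b)).symm

end MatrixIntegral

section HaarIntegral

variable {G : Type*} [Group G] [MeasurableSpace G]

lemma isMulRightInvariant_of_isProbabilityMeasure [TopologicalSpace G] [IsTopologicalGroup G]
    [LocallyCompactSpace G] [BorelSpace G] (μ : Measure G) [μ.IsHaarMeasure]
    [IsProbabilityMeasure μ] : μ.IsMulRightInvariant where
  map_mul_right_eq_self h := by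
    have := Measure.isProbabilityMeasure_map (μ := μ) (measurable_mul_const h).aemeasurable
    exact Measure.isHaarMeasure_eq_of_isProbabilityMeasure _ _

variable [MeasurableMul G] (μ : Measure G) [μ.IsMulLeftInvariant] [μ.IsMulRightInvariant]

lemma integral_comp_mul_mul {E : Type*} [NormedAddCommGroup E] [NormedSpace ℝ E] (F : G → E)
    (a b : G) : ∫ k, F (a * k * b) ∂μ = ∫ k, F k ∂μ :=
  (integral_mul_left_eq_self (fun k => F (k * b)) a).trans (integral_mul_right_eq_self F b)

lemma matrixIntegral_comp_mul_mul {p r : Type*} (F : G → Matrix p r ℂ) (a b : G) :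
    matrixIntegral (fun k => F (a * k * b)) μ = matrixIntegral F μ := by
  ext i j
  exact integral_comp_mul_mul μ (fun k => F k i j) a b

end HaarIntegral

section Representation

variable {G : Type*} [Group G] {ι : Type*} [Fintype ι] {n : ι → Type*} [∀ i, Fintype (n i)]
  [∀ i, DecidableEq (n i)] {p : Type*} [Fintype p] [DecidableEq p]

lemma conjTranspose_apply_eq_apply_inv (ρ : G →* Matrix p p ℂ) {g : G}
    (hρ : (ρ g)ᴴ * ρ g = 1) : (ρ g)ᴴ = ρ g⁻¹ :=
  left_inv_eq_right_inv hρ (by rw [← map_mul, mul_inv_cancel, map_one])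

noncomputable def expPairing (q : ∀ i, G →* Matrix (n i) (n i) ℂ) (v : ∀ i, Matrix (n i) (n i) ℂ)
    (k : G) : ℂ :=
  Complex.exp (∑ i, (v i * (q i k)ᴴ).trace)

variable (q : ∀ i, G →* Matrix (n i) (n i) ℂ)

lemma continuous_expPairing [TopologicalSpace G] (hq_cont : ∀ i, Continuous (q i))
    (v : ∀ i, Matrix (n i) (n i) ℂ) : Continuous (expPairing q v) := by
  unfold expPairing
  fun_prop

/-- The paper's `F_ρ(v) = N_ρ(v) / D(v)`. -/
noncomputable def tiltedMean [MeasurableSpace G] (μ : Measure G) (ρ : G → Matrix p p ℂ)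
    (v : ∀ i, Matrix (n i) (n i) ℂ) : Matrix p p ℂ :=
  (∫ k, expPairing q v k ∂μ)⁻¹ • matrixIntegral (fun k => expPairing q v k • ρ k) μ

variable (hq : ∀ i g, (q i g)ᴴ * q i g = 1)
include hq

lemma expPairing_mul_mul (v : ∀ i, Matrix (n i) (n i) ℂ) (a b k : G) :
    expPairing q (fun i => q i a * v i * q i b) k = expPairing q v (a⁻¹ * k * b⁻¹) := by
  simp only [expPairing, map_mul, conjTranspose_mul, conjTranspose_apply_eq_apply_inv _ (hq _ _),
    inv_inv]
  congr 1
  refine Finset.sum_congr rfl fun i _ => ?_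
  simp only [mul_assoc]
  rw [trace_mul_comm (q i a)]
  simp only [mul_assoc]

lemma tiltedMean_mul_mul [TopologicalSpace G] [IsTopologicalGroup G] [CompactSpace G]
    [MeasurableSpace G] [BorelSpace G] (μ : Measure G) [μ.IsHaarMeasure] [μ.IsMulRightInvariant]
    (hq_cont : ∀ i, Continuous (q i)) (ρ : G →* Matrix p p ℂ) (hρ : Continuous ρ)
    (v : ∀ i, Matrix (n i) (n i) ℂ) (a b : G) :
    tiltedMean q μ ρ (fun i => q i a * v i * q i b) = ρ a * tiltedMean q μ ρ v * ρ b := by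
  have hD : ∫ k, expPairing q (fun i => q i a * v i * q i b) k ∂μ = ∫ k, expPairing q v k ∂μ := by
    simp_rw [expPairing_mul_mul q hq]
    exact integral_comp_mul_mul μ (expPairing q v) a⁻¹ b⁻¹
  have hint : ∀ i j, Integrable (fun k => (expPairing q v k • ρ k) i j) μ := fun i j =>
    ((continuous_expPairing q hq_cont v).mul (hρ.matrix_elem i j)).integrable_of_hasCompactSupport
      (HasCompactSupport.of_compactSpace _)
  have hN : matrixIntegral (fun k => expPairing q (fun i => q i a * v i * q i b) k • ρ k) μ =
      ρ a * matrixIntegral (fun k => expPairing q v k • ρ k) μ * ρ b := by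
    rw [← matrixIntegral_mul_mul _ _ hint, ← matrixIntegral_comp_mul_mul μ _ a b]
    congr 1
    funext k
    rw [expPairing_mul_mul q hq, show a⁻¹ * (a * k * b) * b⁻¹ = k by group, map_mul, map_mul,
      Matrix.mul_smul, Matrix.smul_mul]
  rw [tiltedMean, tiltedMean, hD, hN, Matrix.mul_smul, Matrix.smul_mul]

end Representation

theorem statement2_general
    {G : Type*} [Group G] [TopologicalSpace G] [IsTopologicalGroup G] [CompactSpace G]
    [MeasurableSpace G] [BorelSpace G]
    (μ : Measure G) [μ.IsHaarMeasure] [IsProbabilityMeasure μ]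
    {m : ℕ} (d : Fin m → ℕ)
    (q : ∀ i : Fin m, G → Matrix (Fin (d i)) (Fin (d i)) ℂ)
    (hq_mul : ∀ i, ∀ a b : G, q i (a * b) = q i a * q i b)
    (hq_one : ∀ i, q i 1 = 1)
    (hq_unitary : ∀ i, ∀ g : G, (q i g)ᴴ * q i g = 1)
    (hq_cont : ∀ i, Continuous (q i))
    (i₀ : Fin m)
    -- the numerator `N_ρ(w) = ∫_G ρ(g) exp(Σᵢ ⟨wᵢ, qᵢ(g)⟩) dg`, entrywise
    (N : (∀ i : Fin m, Matrix (Fin (d i)) (Fin (d i)) ℂ) →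
      Matrix (Fin (d i₀)) (Fin (d i₀)) ℂ)
    (hN : ∀ w, N w = Matrix.of fun a b =>
      ∫ k, q i₀ k a b * Complex.exp (∑ i, (w i * (q i k)ᴴ).trace) ∂μ)
    -- the denominator `D(w) = ∫_G exp(Σᵢ ⟨wᵢ, qᵢ(g)⟩) dg`
    (D : (∀ i : Fin m, Matrix (Fin (d i)) (Fin (d i)) ℂ) → ℂ)
    (hD : ∀ w, D w = ∫ k, Complex.exp (∑ i, (w i * (q i k)ᴴ).trace) ∂μ)
    -- the noise measures νᵢ, invariant under multiplication by the qᵢ(h⁻¹)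
    (ν : ∀ i : Fin m, Measure (Matrix (Fin (d i)) (Fin (d i)) ℂ))
    (hνprob : ∀ i, IsProbabilityMeasure (ν i))
    (hν_left : ∀ i, ∀ h : G,
      MeasurePreserving (fun z => q i h⁻¹ * z) (ν i) (ν i))
    (hν_right : ∀ i, ∀ h : G,
      MeasurePreserving (fun z => z * q i h⁻¹) (ν i) (ν i))
    (γ : Fin m → ℝ)
    -- the argument tuple `w(g, z)ᵢ = γᵢ qᵢ(g) + √γᵢ zᵢ`
    (w : G → (∀ i : Fin m, Matrix (Fin (d i)) (Fin (d i)) ℂ) →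
      (∀ i : Fin m, Matrix (Fin (d i)) (Fin (d i)) ℂ))
    (hw : ∀ g z i, w g z i = ((γ i : ℂ) • q i g) + ((Real.sqrt (γ i) : ℂ) • z i))
    -- `F_ρ(w(g, ·))` is integrable (entrywise)
    (hInt : ∀ g : G, ∀ a b : Fin (d i₀),
      Integrable (fun z => (D (w g z))⁻¹ * N (w g z) a b) (Measure.pi ν))
    -- `f_ρ(g) = ∫ F_ρ(w(g, z)) dν(z)`, entrywise
    (f : G → Matrix (Fin (d i₀)) (Fin (d i₀)) ℂ)
    (hf : ∀ g, f g = Matrix.of fun a b =>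
      ∫ z, (D (w g z))⁻¹ * N (w g z) a b ∂(Measure.pi ν)) :
    ∀ g h : G, f (h * g) = q i₀ h * f g ∧ f (g * h) = f g * q i₀ h := by
  have := hνprob
  have := isMulRightInvariant_of_isProbabilityMeasure μ
  obtain ⟨ρ, rfl⟩ : ∃ ρ : ∀ i, G →* Matrix (Fin (d i)) (Fin (d i)) ℂ, (fun i => ⇑(ρ i)) = q :=
    ⟨fun i => ⟨⟨q i, hq_one i⟩, hq_mul i⟩, rfl⟩
  have hF : ∀ v, (D v)⁻¹ • N v = tiltedMean ρ μ (ρ i₀) v := fun v => by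
    ext a b
    simp only [hD, hN, tiltedMean, matrixIntegral, expPairing, Matrix.smul_apply, of_apply,
      smul_eq_mul, mul_comm (Complex.exp _)]
  have hf' : ∀ g, f g = matrixIntegral (fun z => tiltedMean ρ μ (ρ i₀) (w g z)) (Measure.pi ν) :=
    fun g => by rw [hf]; simp only [← hF]; rfl
  have hInt' : ∀ g a b, Integrable (fun z => tiltedMean ρ μ (ρ i₀) (w g z) a b) (Measure.pi ν) :=
    fun g a b => by simp only [← hF]; exact hInt g a b
  have hν_mul : ∀ a b : G, MeasurePreserving (fun (z : ∀ i, Matrix (Fin (d i)) (Fin (d i)) ℂ) i =>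
      ρ i a * z i * ρ i b) (Measure.pi ν) (Measure.pi ν) := fun a b =>
    measurePreserving_pi _ _ fun i => by simpa using (hν_right i b⁻¹).comp (hν_left i a⁻¹)
  have hw_mul : ∀ a g b z, w (a * g * b) (fun i => ρ i a * z i * ρ i b) =
      fun i => ρ i a * w g z i * ρ i b := fun a g b z => by
    funext i
    simp only [hw, map_mul, mul_add, add_mul, Matrix.mul_smul, Matrix.smul_mul]
  have hf_mul : ∀ a g b, f (a * g * b) = ρ i₀ a * f g * ρ i₀ b := fun a g b => by
    rw [hf', ← (hν_mul a b).matrixIntegral_comp fun i j => (hInt' _ i j).aestronglyMeasurable]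
    simp only [hw_mul, tiltedMean_mul_mul ρ hq_unitary μ hq_cont (ρ i₀) (hq_cont i₀)]
    rw [matrixIntegral_mul_mul _ _ (hInt' g), hf']
  intro g h
  exact ⟨by simpa using hf_mul h g 1, by simpa using hf_mul 1 g h⟩

/-- If each noise distribution `νᵢ` is invariant under left and right
multiplication by the unitaries `qᵢ(h⁻¹)`, then the averaged MMSE map
`f_ρ(g) = ∫ F_ρ((γᵢ qᵢ(g) + √γᵢ zᵢ)ᵢ) dν(z)` is both left- and right-equivariant:
`f_ρ(hg) = ρ(h) f_ρ(g)` and `f_ρ(gh) = f_ρ(g) ρ(h)`. -/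
theorem statement2
    {G : Type*} [Group G] [TopologicalSpace G] [IsTopologicalGroup G] [CompactSpace G]
    [MeasurableSpace G] [BorelSpace G]
    (μ : Measure G) [μ.IsHaarMeasure] [IsProbabilityMeasure μ]
    {m : ℕ} (d : Fin m → ℕ)
    (q : ∀ i : Fin m, G → Matrix (Fin (d i)) (Fin (d i)) ℂ)
    (hq_mul : ∀ i, ∀ a b : G, q i (a * b) = q i a * q i b)
    (hq_one : ∀ i, q i 1 = 1)
    (hq_unitary : ∀ i, ∀ g : G, (q i g)ᴴ * q i g = 1)
    (hq_cont : ∀ i, Continuous (q i))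
    (i₀ : Fin m)
    -- the numerator `N_ρ(w) = ∫_G ρ(g) exp(Σᵢ ⟨wᵢ, qᵢ(g)⟩) dg`, entrywise
    (N : (∀ i : Fin m, Matrix (Fin (d i)) (Fin (d i)) ℂ) →
      Matrix (Fin (d i₀)) (Fin (d i₀)) ℂ)
    (hN : ∀ w, N w = Matrix.of fun a b =>
      ∫ k, q i₀ k a b * Complex.exp (∑ i, (w i * (q i k)ᴴ).trace) ∂μ)
    -- the denominator `D(w) = ∫_G exp(Σᵢ ⟨wᵢ, qᵢ(g)⟩) dg`
    (D : (∀ i : Fin m, Matrix (Fin (d i)) (Fin (d i)) ℂ) → ℂ)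
    (hD : ∀ w, D w = ∫ k, Complex.exp (∑ i, (w i * (q i k)ᴴ).trace) ∂μ)
    -- the noise measures νᵢ, invariant under multiplication by the qᵢ(h⁻¹)
    (ν : ∀ i : Fin m, Measure (Matrix (Fin (d i)) (Fin (d i)) ℂ))
    (hνprob : ∀ i, IsProbabilityMeasure (ν i))
    (hν_left : ∀ i, ∀ h : G,
      MeasurePreserving (fun z => q i h⁻¹ * z) (ν i) (ν i))
    (hν_right : ∀ i, ∀ h : G,
      MeasurePreserving (fun z => z * q i h⁻¹) (ν i) (ν i))
    (γ : Fin m → ℝ) (hγ : ∀ i, 0 ≤ γ i)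
    -- the argument tuple `w(g, z)ᵢ = γᵢ qᵢ(g) + √γᵢ zᵢ`
    (w : G → (∀ i : Fin m, Matrix (Fin (d i)) (Fin (d i)) ℂ) →
      (∀ i : Fin m, Matrix (Fin (d i)) (Fin (d i)) ℂ))
    (hw : ∀ g z i, w g z i = ((γ i : ℂ) • q i g) + ((Real.sqrt (γ i) : ℂ) • z i))
    -- the denominator is a.e. nonzero, and `F_ρ(w(g, ·))` is integrable (entrywise)
    (hDne : ∀ g : G, ∀ᵐ z ∂(Measure.pi ν), D (w g z) ≠ 0)
    (hInt : ∀ g : G, ∀ a b : Fin (d i₀),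
      Integrable (fun z => (D (w g z))⁻¹ * N (w g z) a b) (Measure.pi ν))
    -- `f_ρ(g) = ∫ F_ρ(w(g, z)) dν(z)`, entrywise
    (f : G → Matrix (Fin (d i₀)) (Fin (d i₀)) ℂ)
    (hf : ∀ g, f g = Matrix.of fun a b =>
      ∫ z, (D (w g z))⁻¹ * N (w g z) a b ∂(Measure.pi ν)) :
    ∀ g h : G, f (h * g) = q i₀ h * f g ∧ f (g * h) = f g * q i₀ h :=
  statement2_general μ d q hq_mul hq_one hq_unitary hq_cont i₀ N hN D hD ν hνprob hν_left hν_right γ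
    w hw hInt f hf
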